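/- arXiv:2411.04452 — 2 statements merged into one kernel-verified Lean document; each statement's English description precedes it below -/
import Mathlib

section
/- Let U, X ∈ ℂ^{D×r} with X of full column rank r, and let R be a unitary r×r matrix attaining min_{R' unitary} ‖U − X R'‖_F. Then ‖U − X R‖_F² ≤ (1/(2(√2 − 1)·σ_r(X)²))·‖U U^H − X X^H‖_F². -/
open Matrix
open scoped BigOperators ComplexOrder

/-- Frobenius norm of a complex matrix. -/
noncomputable def frobNorm {m n : ℕ} (A : Matrix (Fin m) (Fin n) ℂ) : ℝ :=
  Real.sqrt (∑ i, ∑ j, ‖A i j‖ ^ 2)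

/-- Spectral norm (largest singular value) of a complex matrix, as the operator
norm of the induced map between Euclidean spaces. -/
noncomputable def specNorm {m n : ℕ} (A : Matrix (Fin m) (Fin n) ℂ) : ℝ :=
  ‖LinearMap.toContinuousLinearMap (Matrix.toEuclideanLin A)‖

/-- The measurement map `𝒜(ρ)_k = trace (A k * ρ)` satisfies the `(s, δ)`-RIP. -/
def IsRIP {D K : ℕ} (A : Fin K → Matrix (Fin D) (Fin D) ℂ) (s : ℕ) (δ : ℝ) : Prop :=
  ∀ ρ : Matrix (Fin D) (Fin D) ℂ, ρ.rank ≤ s →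
    (1 - δ) * frobNorm ρ ^ 2 ≤ ((D : ℝ) / (K : ℝ)) * ∑ k, ‖Matrix.trace (A k * ρ)‖ ^ 2 ∧
      ((D : ℝ) / (K : ℝ)) * ∑ k, ‖Matrix.trace (A k * ρ)‖ ^ 2 ≤ (1 + δ) * frobNorm ρ ^ 2

/-- The adjoint of the measurement map: `𝒜*(e) = Σ_k e_k A_k`. -/
noncomputable def adjointMap {D K : ℕ} (A : Fin K → Matrix (Fin D) (Fin D) ℂ)
    (e : Fin K → ℝ) : Matrix (Fin D) (Fin D) ℂ :=
  ∑ k, (e k : ℂ) • A k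

/-- The Wirtinger gradient `G(U) = (D/K) Σ_k (trace(A_k U Uᴴ) − ŷ_k) A_k U`. -/
noncomputable def wGrad {D K r : ℕ} (A : Fin K → Matrix (Fin D) (Fin D) ℂ)
    (yhat : Fin K → ℝ) (U : Matrix (Fin D) (Fin r) ℂ) : Matrix (Fin D) (Fin r) ℂ :=
  ((D : ℂ) / (K : ℂ)) • ∑ k, (Matrix.trace (A k * (U * Uᴴ)) - (yhat k : ℂ)) • (A k * U)

/-- The Wirtinger Hessian quadratic form at `U` in direction `Δ`. -/
noncomputable def wHess {D K r : ℕ} (A : Fin K → Matrix (Fin D) (Fin D) ℂ)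
    (yhat : Fin K → ℝ) (U Δ : Matrix (Fin D) (Fin r) ℂ) : ℝ :=
  (2 * (D : ℝ) / (K : ℝ)) * ∑ k, (‖Matrix.trace (A k * (U * Δᴴ))‖ ^ 2
      + ((Matrix.trace (A k * (U * Δᴴ))) ^ 2).re)
    + (2 * (D : ℝ) / (K : ℝ)) *
      (Matrix.trace ((∑ k, (Matrix.trace (A k * (U * Uᴴ)) - (yhat k : ℂ)) • A k)
        * (Δ * Δᴴ))).re

/-- The function `h(δ)` from the recovery-error bound. -/
noncomputable def hfun (δ : ℝ) : ℝ :=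
  (Real.sqrt 2 + Real.sqrt (82.55 - 762.54 * δ - 843.09 * δ ^ 2)) / (1.5 - 15.7 * δ)

/-- The smallest singular value `σ_r(X)`: the square root of the smallest
eigenvalue of `Xᴴ X`. -/
noncomputable def sigmaMin {D r : ℕ} (X : Matrix (Fin D) (Fin r) ℂ) : ℝ :=
  Real.sqrt (⨅ i : Fin r, (Matrix.isHermitian_conjTranspose_mul_self X).eigenvalues i)

/-!
Write `Y = X R` and `Δ = U - Y`. Minimality of `R` among unitaries forces `Yᴴ U` to be positive
semidefinite: composing `R` with a rank-one unitary that rotates a single vector `x` by a phase `ω`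
changes `re tr (Yᴴ U)` by `re ((ω - 1) xᴴ Yᴴ U x) / ‖x‖²`, which must never be positive.
Since `U Uᴴ - X Xᴴ = Δ Uᴴ + Y Δᴴ` with `Yᴴ Δ` Hermitian, expanding gives
`‖U Uᴴ - X Xᴴ‖² - (2√2 - 2) tr (Δᴴ Δ Yᴴ Y) = ‖Δᴴ Δ + √2 Yᴴ Δ‖² + (4 - 2√2) tr (Δᴴ Δ Yᴴ U) ≥ 0`,
and `tr (Δᴴ Δ Yᴴ Y) ≥ σ_r(X)² ‖Δ‖²` because every eigenvalue of `Xᴴ X` is at least `σ_r(X)²`.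
-/

lemma Complex.nonneg_of_forall_re_mul_le {q : ℂ} (h : ∀ ω : ℂ, ‖ω‖ = 1 → (ω * q).re ≤ q.re) :
    0 ≤ q := by
  rcases eq_or_ne q 0 with rfl | hq
  · rfl
  have hnorm : (‖q‖ : ℂ) ≠ 0 := by exact_mod_cast norm_ne_zero_iff.mpr hq
  have hrot : starRingEnd ℂ q / ‖q‖ * q = ‖q‖ := by
    rw [div_mul_eq_mul_div, Complex.conj_mul', sq, mul_div_assoc, div_self hnorm, mul_one]
  have hle := h (starRingEnd ℂ q / ‖q‖) (by simp [hq])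
  rw [hrot, Complex.ofReal_re] at hle
  exact Complex.re_eq_norm.mp (le_antisymm (Complex.re_le_norm q) hle)

namespace Matrix

section Trace

variable {m n : Type*} [Fintype m] [Fintype n]

lemma re_trace_conjTranspose_mul_comm (A B : Matrix m n ℂ) :
    (trace (Aᴴ * B)).re = (trace (Bᴴ * A)).re := by
  rw [← conjTranspose_conjTranspose A, ← conjTranspose_mul, trace_conjTranspose,
    conjTranspose_conjTranspose]
  rfl

lemma trace_mul_mul_mul_cycle {l p : Type*} [Fintype l] [Fintype p] (A : Matrix m n ℂ)
    (B : Matrix n l ℂ) (C : Matrix l p ℂ) (E : Matrix p m ℂ) :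
    trace (A * B * (C * E)) = trace (B * C * (E * A)) := by
  rw [Matrix.mul_assoc, trace_mul_comm, Matrix.mul_assoc, Matrix.mul_assoc, Matrix.mul_assoc]

lemma trace_vecMulVec_star_mul (x : n → ℂ) (P : Matrix n n ℂ) :
    trace (vecMulVec x (star x) * P) = star x ⬝ᵥ (P *ᵥ x) := by
  rw [vecMulVec_mul, trace_vecMulVec, dotProduct_comm, dotProduct_mulVec]

end Trace

section PosSemidef

variable {m n 𝕜 : Type*} [Fintype m] [Fintype n] [DecidableEq n] [RCLike 𝕜]

lemma posSemidef_of_forall_dotProduct_mulVec_nonneg {P : Matrix n n ℂ}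
    (h : ∀ x, 0 ≤ star x ⬝ᵥ (P *ᵥ x)) : P.PosSemidef := by
  rw [← isPositive_toEuclideanLin_iff, LinearMap.isPositive_iff_complex]
  intro x
  have hx := h x
  have hq : x.ofLp ⬝ᵥ star (P *ᵥ x.ofLp) = star x.ofLp ⬝ᵥ (P *ᵥ x.ofLp) := by
    rw [dotProduct_comm, star_dotProduct, (IsSelfAdjoint.of_nonneg hx).star_eq]
  simp only [EuclideanSpace.inner_eq_star_dotProduct, toLpLin_apply, hq]
  exact ⟨(Complex.eq_re_of_ofReal_le (Complex.ofReal_zero ▸ hx)).symm,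
    (Complex.nonneg_iff.mp hx).1⟩

-- The unitary that multiplies `x` by `ω` and fixes the orthogonal complement of `x`.
lemma one_add_smul_vecMulVec_mul_conjTranspose {x : n → ℂ} (hx : x ≠ 0) {ω : ℂ}
    (hω : ‖ω‖ = 1) :
    (1 + ((ω - 1) / (star x ⬝ᵥ x)) • vecMulVec x (star x)) *
      (1 + ((ω - 1) / (star x ⬝ᵥ x)) • vecMulVec x (star x))ᴴ = 1 := by
  set N := star x ⬝ᵥ x
  set c := (ω - 1) / N
  have hN : N ≠ 0 := (dotProduct_star_self_pos_iff.mpr hx).ne'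
  have hNreal : star N = N := (IsSelfAdjoint.of_nonneg (dotProduct_star_self_nonneg x)).star_eq
  have hωω : star ω * ω = 1 := by
    rw [RCLike.star_def, Complex.conj_mul', hω]
    simp
  have hc : c + star c + c * star c * N = 0 := by
    simp only [c, star_div₀, star_sub, star_one, hNreal]
    field_simp
    linear_combination hωω
  have hsq : vecMulVec x (star x) * vecMulVec x (star x) = N • vecMulVec x (star x) := by
    rw [vecMulVec_mul_vecMulVec, vecMulVec_smul]
  calc _ = 1 + (c + star c + c * star c * N) • vecMulVec x (star x) := by
        simp only [conjTranspose_add, conjTranspose_one, conjTranspose_smul,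
          conjTranspose_vecMulVec, star_star, add_mul, mul_add, one_mul, mul_one,
          smul_mul_smul_comm, hsq, smul_smul]
        module
    _ = 1 := by rw [hc, zero_smul, add_zero]

lemma posSemidef_of_forall_re_trace_conjTranspose_mul_le {P : Matrix n n ℂ}
    (h : ∀ V : Matrix n n ℂ, Vᴴ * V = 1 → (trace (Vᴴ * P)).re ≤ (trace P).re) :
    P.PosSemidef := by
  refine posSemidef_of_forall_dotProduct_mulVec_nonneg fun x => ?_
  rcases eq_or_ne x 0 with rfl | hx
  · simp
  set N := star x ⬝ᵥ x
  set q := star x ⬝ᵥ (P *ᵥ x)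
  have hN : 0 < N := dotProduct_star_self_pos_iff.mpr hx
  suffices hq : 0 ≤ q / N by simpa [div_mul_cancel₀ _ hN.ne'] using mul_nonneg hq hN.le
  refine Complex.nonneg_of_forall_re_mul_le fun ω hω => ?_
  have hle := h (1 + ((ω - 1) / N) • vecMulVec x (star x))ᴴ
    (by rw [conjTranspose_conjTranspose]; exact one_add_smul_vecMulVec_mul_conjTranspose hx hω)
  rw [conjTranspose_conjTranspose, Matrix.add_mul, Matrix.one_mul, trace_add, smul_mul_assoc,
    trace_smul, trace_vecMulVec_star_mul, smul_eq_mul, Complex.add_re,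
    show (ω - 1) / N * q = ω * (q / N) - q / N by ring, Complex.sub_re] at hle
  linarith

lemma IsHermitian.posSemidef_sub_smul_one {G : Matrix n n 𝕜} (hG : G.IsHermitian) {c : ℝ}
    (hc : ∀ i, c ≤ hG.eigenvalues i) : (G - c • (1 : Matrix n n 𝕜)).PosSemidef := by
  have hdiag : G - c • (1 : Matrix n n 𝕜) = Unitary.conjStarAlgAut 𝕜 _ hG.eigenvectorUnitary
      (diagonal (RCLike.ofReal ∘ fun i => hG.eigenvalues i - c)) := by
    conv_lhs => rw [hG.spectral_theorem]
    rw [RCLike.real_smul_eq_coe_smul (K := 𝕜),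
      ← map_one (Unitary.conjStarAlgAut 𝕜 _ hG.eigenvectorUnitary), ← map_smul, ← map_sub]
    congr 1
    ext i j
    by_cases hij : i = j <;> simp [hij, Algebra.algebraMap_eq_smul_one, sub_smul]
  rw [hdiag, Unitary.conjStarAlgAut_apply, Unitary.isUnit_coe.posSemidef_star_right_conjugate_iff,
    posSemidef_diagonal_iff]
  intro i
  simpa using hc i

lemma IsHermitian.mul_re_trace_mul_conjTranspose_le {G : Matrix n n 𝕜} (hG : G.IsHermitian)
    {c : ℝ} (hc : ∀ i, c ≤ hG.eigenvalues i) (B : Matrix m n 𝕜) :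
    c * RCLike.re (trace (B * Bᴴ)) ≤ RCLike.re (trace (B * G * Bᴴ)) := by
  have h := (RCLike.nonneg_iff.mp
    ((hG.posSemidef_sub_smul_one hc).mul_mul_conjTranspose_same B).trace_nonneg).1
  rw [Matrix.mul_sub, Matrix.sub_mul, trace_sub, Matrix.mul_smul, Matrix.mul_one, Matrix.smul_mul,
    trace_smul, map_sub, RCLike.smul_re] at h
  linarith

lemma eigenvalues_conjTranspose_mul_self_pos {X : Matrix m n 𝕜} (hX : X.rank = Fintype.card n)
    (i : n) : 0 < (isHermitian_conjTranspose_mul_self X).eigenvalues i := by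
  refine (eigenvalues_conjTranspose_mul_self_nonneg X i).lt_of_ne' fun h0 => ?_
  have hlt := Fintype.card_subtype_lt
    (p := fun j => (isHermitian_conjTranspose_mul_self X).eigenvalues j ≠ 0) (x := i) (by simpa)
  rw [← IsHermitian.rank_eq_card_non_zero_eigs, rank_conjTranspose_mul_self, hX] at hlt
  exact hlt.false

end PosSemidef

end Matrix

section FrobeniusNorm

variable {m n : ℕ}

lemma frobNorm_nonneg (A : Matrix (Fin m) (Fin n) ℂ) : 0 ≤ frobNorm A := Real.sqrt_nonneg _

lemma frobNorm_sq (A : Matrix (Fin m) (Fin n) ℂ) : frobNorm A ^ 2 = (trace (Aᴴ * A)).re := by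
  rw [frobNorm, Real.sq_sqrt (by positivity), trace, Complex.re_sum, Finset.sum_comm]
  refine Finset.sum_congr rfl fun j _ => ?_
  simp [mul_apply, Complex.re_sum, ← Complex.normSq_eq_norm_sq, Complex.normSq_apply]

lemma frobNorm_sub_sq (A B : Matrix (Fin m) (Fin n) ℂ) :
    frobNorm (A - B) ^ 2 = frobNorm A ^ 2 + frobNorm B ^ 2 - 2 * (trace (Bᴴ * A)).re := by
  simp only [frobNorm_sq, conjTranspose_sub, Matrix.sub_mul, Matrix.mul_sub, trace_sub,
    Complex.sub_re]
  rw [re_trace_conjTranspose_mul_comm A B]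
  ring

lemma frobNorm_mul_sq_of_mul_conjTranspose_eq_one (A : Matrix (Fin m) (Fin n) ℂ)
    {V : Matrix (Fin n) (Fin n) ℂ} (hV : V * Vᴴ = 1) :
    frobNorm (A * V) ^ 2 = frobNorm A ^ 2 := by
  rw [frobNorm_sq, frobNorm_sq, conjTranspose_mul, Matrix.mul_assoc, trace_mul_comm,
    Matrix.mul_assoc, Matrix.mul_assoc, hV, Matrix.mul_one]

end FrobeniusNorm

variable {D r : ℕ}

lemma sigmaMin_sq (X : Matrix (Fin D) (Fin r) ℂ) :
    sigmaMin X ^ 2 = ⨅ i, (isHermitian_conjTranspose_mul_self X).eigenvalues i :=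
  Real.sq_sqrt (Real.iInf_nonneg (eigenvalues_conjTranspose_mul_self_nonneg X))

lemma sigmaMin_sq_le (X : Matrix (Fin D) (Fin r) ℂ) (i : Fin r) :
    sigmaMin X ^ 2 ≤ (isHermitian_conjTranspose_mul_self X).eigenvalues i :=
  sigmaMin_sq X ▸ ciInf_le (Finite.bddBelow_range _) i

lemma sigmaMin_sq_pos {X : Matrix (Fin D) (Fin r) ℂ} (hX : X.rank = r) (hr : 0 < r) :
    0 < sigmaMin X ^ 2 := by
  have : Nonempty (Fin r) := ⟨⟨0, hr⟩⟩
  obtain ⟨i, hi⟩ :=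
    exists_eq_ciInf_of_finite (f := (isHermitian_conjTranspose_mul_self X).eigenvalues)
  rw [sigmaMin_sq, ← hi]
  exact eigenvalues_conjTranspose_mul_self_pos (by simpa using hX) i

lemma sigmaMin_sq_mul_frobNorm_sq_le (X : Matrix (Fin D) (Fin r) ℂ)
    {R : Matrix (Fin r) (Fin r) ℂ} (hR : Rᴴ * R = 1) (Δ : Matrix (Fin D) (Fin r) ℂ) :
    sigmaMin X ^ 2 * frobNorm Δ ^ 2 ≤ (trace (Δᴴ * Δ * ((X * R)ᴴ * (X * R)))).re := by
  have hnorm : Δ * Rᴴ * (Δ * Rᴴ)ᴴ = Δ * Δᴴ := by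
    rw [conjTranspose_mul, conjTranspose_conjTranspose, Matrix.mul_assoc, ← Matrix.mul_assoc Rᴴ,
      hR, Matrix.one_mul]
  have htrace : trace (Δᴴ * Δ * ((X * R)ᴴ * (X * R))) =
      trace (Δ * Rᴴ * (Xᴴ * X) * (Δ * Rᴴ)ᴴ) := by
    simp only [conjTranspose_mul, conjTranspose_conjTranspose, Matrix.mul_assoc]
    rw [trace_mul_comm]
    simp only [Matrix.mul_assoc]
  rw [frobNorm_sq, trace_mul_comm, ← hnorm, htrace]
  exact (isHermitian_conjTranspose_mul_self X).mul_re_trace_mul_conjTranspose_le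
    (sigmaMin_sq_le X) _

lemma posSemidef_conjTranspose_mul_of_forall_frobNorm_le {U X : Matrix (Fin D) (Fin r) ℂ}
    {R : Matrix (Fin r) (Fin r) ℂ} (hR : Rᴴ * R = 1)
    (hmin : ∀ R' : Matrix (Fin r) (Fin r) ℂ, R'ᴴ * R' = 1 →
      frobNorm (U - X * R) ≤ frobNorm (U - X * R')) :
    ((X * R)ᴴ * U).PosSemidef := by
  refine posSemidef_of_forall_re_trace_conjTranspose_mul_le fun V hV => ?_
  have hRV : (R * V)ᴴ * (R * V) = 1 := by
    rw [conjTranspose_mul, Matrix.mul_assoc, ← Matrix.mul_assoc Rᴴ, hR, Matrix.one_mul, hV]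
  have hle := pow_le_pow_left₀ (frobNorm_nonneg _) (hmin _ hRV) 2
  rw [frobNorm_sub_sq, frobNorm_sub_sq, ← Matrix.mul_assoc,
    frobNorm_mul_sq_of_mul_conjTranspose_eq_one _ (mul_eq_one_comm.mp hV),
    conjTranspose_mul (X * R) V, Matrix.mul_assoc] at hle
  linarith

lemma frobNorm_sq_add_mul_conjTranspose_sub (Y Δ : Matrix (Fin D) (Fin r) ℂ)
    (hA : (Yᴴ * Δ).IsHermitian) :
    frobNorm ((Y + Δ) * (Y + Δ)ᴴ - Y * Yᴴ) ^ 2 =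
      (trace (Δᴴ * Δ * (Δᴴ * Δ))).re + 2 * (trace (Yᴴ * Δ * (Yᴴ * Δ))).re
        + 4 * (trace (Δᴴ * Δ * (Yᴴ * Δ))).re + 2 * (trace (Δᴴ * Δ * (Yᴴ * Y))).re := by
  have hM : (Y + Δ) * (Y + Δ)ᴴ - Y * Yᴴ = Δ * (Y + Δ)ᴴ + Y * Δᴴ := by
    rw [conjTranspose_add, Matrix.add_mul, Matrix.mul_add, Matrix.mul_add]
    abel
  have hMH : (Δ * (Y + Δ)ᴴ + Y * Δᴴ)ᴴ = Δ * (Y + Δ)ᴴ + Y * Δᴴ := by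
    rw [← hM]
    exact (isHermitian_mul_conjTranspose_self _).sub (isHermitian_mul_conjTranspose_self _)
  have hΔY : Δᴴ * Y = Yᴴ * Δ := by
    rw [← hA.eq, conjTranspose_mul, conjTranspose_conjTranspose]
  rw [frobNorm_sq, hM, hMH, Matrix.add_mul, Matrix.mul_add, Matrix.mul_add, trace_add, trace_add,
    trace_add, trace_mul_mul_mul_cycle Δ _ Δ, trace_mul_mul_mul_cycle Δ _ Y,
    trace_mul_mul_mul_cycle Y _ Δ, trace_mul_mul_mul_cycle Y _ Y]
  simp only [conjTranspose_add, Matrix.add_mul, Matrix.mul_add, trace_add, Complex.add_re, hΔY,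
    trace_mul_comm (Yᴴ * Δ) (Δᴴ * Δ), trace_mul_comm (Yᴴ * Y) (Δᴴ * Δ)]
  ring

lemma mul_re_trace_le_frobNorm_sq_add_mul_conjTranspose_sub (Y Δ : Matrix (Fin D) (Fin r) ℂ)
    (hP : (Yᴴ * (Y + Δ)).PosSemidef) :
    (2 * √2 - 2) * (trace (Δᴴ * Δ * (Yᴴ * Y))).re ≤
      frobNorm ((Y + Δ) * (Y + Δ)ᴴ - Y * Yᴴ) ^ 2 := by
  have hsplit : Yᴴ * (Y + Δ) = Yᴴ * Y + Yᴴ * Δ := Matrix.mul_add _ _ _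
  have hA : (Yᴴ * Δ).IsHermitian := by
    simpa [hsplit] using hP.isHermitian.sub (isHermitian_conjTranspose_mul_self Y)
  have hQ : (Δᴴ * Δ).IsHermitian := isHermitian_conjTranspose_mul_self Δ
  have hp : 0 ≤ (trace (Δᴴ * Δ * (Yᴴ * (Y + Δ)))).re := by
    rw [← trace_mul_cycle]
    exact (Complex.nonneg_iff.mp (hP.mul_mul_conjTranspose_same Δ).trace_nonneg).1
  rw [hsplit, Matrix.mul_add, trace_add, Complex.add_re] at hp
  -- The left side falls short of the right one by this square plus `(4 - 2√2) * hp`.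
  have hH : 0 ≤ frobNorm (Δᴴ * Δ + √2 • (Yᴴ * Δ)) ^ 2 := sq_nonneg _
  rw [frobNorm_sq, conjTranspose_add, conjTranspose_smul, hA.eq, hQ.eq, star_trivial] at hH
  simp only [Matrix.add_mul, Matrix.mul_add, Matrix.smul_mul, Matrix.mul_smul, trace_add,
    trace_smul, Complex.add_re, Complex.smul_re, smul_eq_mul,
    trace_mul_comm (Yᴴ * Δ) (Δᴴ * Δ)] at hH
  rw [mul_add, ← mul_assoc, Real.mul_self_sqrt zero_le_two] at hH
  have h4 : 0 ≤ 4 - 2 * √2 := by nlinarith [Real.sqrt_nonneg 2, Real.sq_sqrt zero_le_two]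
  rw [frobNorm_sq_add_mul_conjTranspose_sub Y Δ hA]
  linarith [mul_nonneg h4 hp]

theorem stmt_16 {D r : ℕ} (U X : Matrix (Fin D) (Fin r) ℂ) (hXrank : X.rank = r)
    (R : Matrix (Fin r) (Fin r) ℂ)
    (hRunit : Rᴴ * R = 1)
    (hRmin : ∀ R' : Matrix (Fin r) (Fin r) ℂ, R'ᴴ * R' = 1 →
      frobNorm (U - X * R) ≤ frobNorm (U - X * R')) :
    frobNorm (U - X * R) ^ 2 ≤
      1 / (2 * (Real.sqrt 2 - 1) * sigmaMin X ^ 2) * frobNorm (U * Uᴴ - X * Xᴴ) ^ 2 := by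
  rcases Nat.eq_zero_or_pos r with rfl | hr
  · simp [frobNorm, sigmaMin]
  have hP := posSemidef_conjTranspose_mul_of_forall_frobNorm_le hRunit hRmin
  obtain ⟨Δ, rfl⟩ : ∃ Δ, U = X * R + Δ := ⟨U - X * R, by abel⟩
  have hXX : X * R * (X * R)ᴴ = X * Xᴴ := by
    rw [conjTranspose_mul, Matrix.mul_assoc, ← Matrix.mul_assoc R, mul_eq_one_comm.mp hRunit,
      Matrix.one_mul]
  have hE := mul_re_trace_le_frobNorm_sq_add_mul_conjTranspose_sub (X * R) Δ hP
  rw [hXX] at hE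
  have hσ := sigmaMin_sq_mul_frobNorm_sq_le X hRunit Δ
  have hσpos := sigmaMin_sq_pos hXrank hr
  have hsqrt : 0 < √2 - 1 := sub_pos.mpr Real.one_lt_sqrt_two
  rw [add_sub_cancel_left, one_div, ← div_eq_inv_mul, le_div_iff₀ (by positivity)]
  linarith [mul_le_mul_of_nonneg_left hσ (by linarith : (0 : ℝ) ≤ 2 * √2 - 2)]
end

section
/- The function h : [0, 0.09] → ℝ defined by h(δ) = (√2 + √(82.55 − 762.54·δ − 843.09·δ²)) / (1.5 − 15.7·δ) is well defined (the expression under the square root is nonnegative and the denominator is positive for all δ ∈ [0, 0.09]) and is monotonically increasing on [0, 0.09]. -/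
open Matrix
open scoped BigOperators ComplexOrder

/-!
Split `h(δ) = √2 / d(δ) + √(g(δ) / d(δ)²)` with `g` the radicand and `d` the denominator.
Since `d` is positive and decreasing, the first summand increases; the second increases because
`g / d²` does, which after clearing denominators is a polynomial inequality in two variables.
-/

open Set

section MonotoneQuotient

variable {s : Set ℝ} {f g : ℝ → ℝ}

theorem AntitoneOn.const_div_of_pos {c : ℝ} (hc : 0 ≤ c) (hg : AntitoneOn g s)
    (hg0 : ∀ x ∈ s, 0 < g x) : MonotoneOn (fun x => c / g x) s :=
  fun _ hx y hy hxy => div_le_div_of_nonneg_left hc (hg0 y hy) (hg hx hy hxy)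

theorem MonotoneOn.sqrt_div_of_div_sq (hfg : MonotoneOn (fun x => f x / g x ^ 2) s)
    (hg0 : ∀ x ∈ s, 0 < g x) : MonotoneOn (fun x => √(f x) / g x) s := by
  have hsqrt : ∀ x ∈ s, √(f x) / g x = √(f x / g x ^ 2) := fun x hx => by
    rw [Real.sqrt_div' _ (sq_nonneg _), Real.sqrt_sq (hg0 x hx).le]
  intro x hx y hy hxy
  simp only [hsqrt x hx, hsqrt y hy]
  exact Real.sqrt_le_sqrt (hfg hx hy hxy)

theorem monotoneOn_add_sqrt_div {c : ℝ} (hc : 0 ≤ c) (hg : AntitoneOn g s)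
    (hg0 : ∀ x ∈ s, 0 < g x) (hfg : MonotoneOn (fun x => f x / g x ^ 2) s) :
    MonotoneOn (fun x => (c + √(f x)) / g x) s := by
  simp only [add_div]
  exact (hg.const_div_of_pos hc hg0).add (hfg.sqrt_div_of_div_sq hg0)

end MonotoneQuotient

namespace HFun

def radicand (δ : ℝ) : ℝ := 82.55 - 762.54 * δ - 843.09 * δ ^ 2

def denom (δ : ℝ) : ℝ := 1.5 - 15.7 * δ

theorem radicand_nonneg {δ : ℝ} (hδ : δ ∈ Icc (0 : ℝ) 0.09) : 0 ≤ radicand δ := by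
  unfold radicand; nlinarith [hδ.1, hδ.2]

theorem denom_pos {δ : ℝ} (hδ : δ ≤ 0.09) : 0 < denom δ := by
  unfold denom; linarith

theorem antitone_denom : Antitone denom := fun a b hab => by
  unfold denom; linarith

theorem radicand_mul_denom_sq_le {a b : ℝ} (hab : a ≤ b) (hb : b ≤ 0.09) :
    radicand a * denom b ^ 2 ≤ radicand b * denom a ^ 2 := by
  unfold radicand denom
  -- the difference of the two sides is `b - a` times a polynomial positive for `a, b ≤ 0.09`
  have hba : 0 ≤ b - a := sub_nonneg.2 hab
  have ha : (0 : ℝ) ≤ 0.09 - a := by linarith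
  have hb : (0 : ℝ) ≤ 0.09 - b := sub_nonneg.2 hb
  nlinarith [mul_nonneg hba (mul_nonneg ha hb), mul_nonneg hba hb, mul_nonneg hba ha]

theorem monotoneOn_radicand_div_denom_sq :
    MonotoneOn (fun δ => radicand δ / denom δ ^ 2) (Iic 0.09) := by
  intro a ha b hb hab
  rw [div_le_div_iff₀ (pow_pos (denom_pos ha) 2) (pow_pos (denom_pos hb) 2)]
  exact radicand_mul_denom_sq_le hab hb

end HFun

/-- `h` is well defined and monotonically increasing on `[0, 0.09]`. -/
theorem stmt_18 :
    (∀ δ ∈ Set.Icc (0 : ℝ) 0.09,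
        0 ≤ 82.55 - 762.54 * δ - 843.09 * δ ^ 2 ∧ 0 < 1.5 - 15.7 * δ) ∧
      MonotoneOn hfun (Set.Icc (0 : ℝ) 0.09) :=
  ⟨fun _ hδ => ⟨HFun.radicand_nonneg hδ, HFun.denom_pos hδ.2⟩,
    monotoneOn_add_sqrt_div (Real.sqrt_nonneg 2) (HFun.antitone_denom.antitoneOn _)
      (fun _ hδ => HFun.denom_pos hδ.2)
      (HFun.monotoneOn_radicand_div_denom_sq.mono Icc_subset_Iic_self)⟩
end
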